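/- Let F be the N-point DFT matrix and let W be the submatrix of F obtained by deleting N−N₁ consecutive rows. Then any N₂ columns of W are linearly independent whenever N₂ ≤ N₁. In particular, any square submatrix of the DFT matrix formed by N₂ ≤ N₁ columns and all N₁ consecutive rows has full column rank N₂. -/
import Mathlib


open Complex

lemma omega_primitive (N : ℕ) (hN : 0 < N) :
    IsPrimitiveRoot (Complex.exp (-(2 * Real.pi * Complex.I) / N)) N := by
  have h := Complex.isPrimitiveRoot_exp N hN.ne'
  have : Complex.exp (-(2 * Real.pi * Complex.I) / N)
      = (Complex.exp (2 * Real.pi * Complex.I / N))⁻¹ := by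
    rw [← Complex.exp_neg]
    ring_nf
  rw [this]
  exact h.inv

/-- Any `N₂ ≤ N₁` columns of the `N₁ × N` submatrix `W` of the `N`-point DFT matrix,
obtained by keeping `N₁` (cyclically) consecutive rows starting at row `r`, are
linearly independent over `ℂ`. -/
theorem stmt4 (N N₁ N₂ : ℕ) (hN : 0 < N) (h1 : N₁ ≤ N) (h2 : N₂ ≤ N₁)
    (r : ℕ) (k : Fin N₂ → Fin N) (hk : Function.Injective k)
    (ω : ℂ) (hω : ω = Complex.exp (-(2 * Real.pi * Complex.I) / N)) :
    LinearIndependent ℂ (fun j : Fin N₂ => fun i : Fin N₁ =>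
      ((1 / Real.sqrt N : ℝ) : ℂ) * ω ^ ((r + i.val) * (k j).val)) := by
  have hprim : IsPrimitiveRoot ω N := hω ▸ omega_primitive N hN
  have hω0 : ω ≠ 0 := hprim.ne_zero hN.ne'
  have hc : ((1 / Real.sqrt N : ℝ) : ℂ) ≠ 0 := by
    simp only [one_div, ne_eq, Complex.ofReal_eq_zero, inv_eq_zero]
    positivity
  -- distinct nodes
  set x : Fin N₂ → ℂ := fun j => ω ^ (k j).val with hx
  have hxinj : Function.Injective x := by
    intro a b hab
    exact hk (Fin.ext (hprim.pow_inj (k a).isLt (k b).isLt hab))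
  rw [Fintype.linearIndependent_iff]
  intro g hg j0
  -- set h j = g j * c * ω^(r * k j); show V.mulVec h = 0 for V = vandermondeᵀ
  set c : ℂ := ((1 / Real.sqrt N : ℝ) : ℂ)
  set h : Fin N₂ → ℂ := fun j => g j * (c * ω ^ (r * (k j).val)) with hh
  have hV : (Matrix.vandermonde x).transpose.mulVec h = 0 := by
    funext i
    have h0 := congrFun hg (Fin.castLE h2 i)
    simp only [Pi.zero_apply] at h0
    simp only [Matrix.mulVec, dotProduct, Matrix.transpose_apply,
      Matrix.vandermonde, Matrix.of_apply, Pi.zero_apply]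
    rw [← h0]
    simp only [Finset.sum_apply, Pi.smul_apply, smul_eq_mul]
    apply Finset.sum_congr rfl
    intro j _
    simp only [hh, hx, Fin.coe_castLE]
    rw [show (r + i.val) * (k j).val = (k j).val * i.val + r * (k j).val from by ring, pow_add]
    ring
  have hdet : (Matrix.vandermonde x).transpose.det ≠ 0 := by
    rw [Matrix.det_transpose, Matrix.det_vandermonde]
    apply Finset.prod_ne_zero_iff.2
    intro i _
    apply Finset.prod_ne_zero_iff.2
    intro j hj
    rw [Finset.mem_Ioi] at hj
    exact sub_ne_zero_of_ne (fun e => absurd (hxinj e) hj.ne')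
  have hinj := Matrix.mulVec_injective_iff_isUnit.2 (Matrix.isUnit_iff_isUnit_det _ |>.2 (isUnit_iff_ne_zero.2 hdet))
  have h0 : h = 0 := by
    apply hinj
    rw [hV, Matrix.mulVec_zero]
  have := congrFun h0 j0
  simp only [hh, Pi.zero_apply, mul_eq_zero] at this
  rcases this with hg0 | hrest
  · exact hg0
  · exact absurd hrest (by simp [hc, pow_ne_zero _ hω0])
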